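/- Let y : (-1,1) → ℝ be continuous with y(t) ≥ γ > 0 for all t ∈ (-1,1), and suppose ∫_{-1}^{1} (1-|τ|)^{μ-1} y(τ) dτ < ∞. Then the function x(t) = ∫_{-1}^{1} G(t,τ) y(τ) dτ satisfies x(t) ≥ 2γ(1-|t|^μ)/Γ(μ+1) for all t ∈ [-1,1]; in particular, x(t) > 0 for t ∈ (-1,1). -/

import Mathlib

noncomputable def greenG (μ t τ : ℝ) : ℝ :=
  (1 / Real.Gamma μ) *
    (if τ ≤ 0 then
      (if τ ≤ t then (1 + τ) ^ (μ - 1)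
       else (1 + τ) ^ (μ - 1) - (τ - t) ^ (μ - 1))
    else
      (if t ≤ τ then (1 - τ) ^ (μ - 1)
       else (1 - τ) ^ (μ - 1) - (t - τ) ^ (μ - 1)))

/-!
For all `t, τ`, `Γ(μ) G(t, τ) = (1 - |τ|)^(μ-1) - 1[τ ∈ Ι t 0] |t - τ|^(μ-1)`, where `Ι t 0` is
the half-open interval between `0` and `t`. For `t ∈ [-1, 1]` the subtracted term is at most
`(1 - |τ|)^(μ-1)`, so `0 ≤ G(t, ·) ≤ (1 - |τ|)^(μ-1) / Γ(μ)` on `[-1, 1]`, which makes `G(t, ·) y`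
integrable, and integrating the two terms gives `∫ G(t, τ) dτ = (2 - |t|^μ) / Γ(μ + 1)`.
Hence `x(t) ≥ γ (2 - |t|^μ) / Γ(μ + 1) ≥ 2γ (1 - |t|^μ) / Γ(μ + 1)`.
-/

open MeasureTheory Set intervalIntegral
open scoped Interval

lemma greenG_eq_sub_indicator {μ : ℝ} (hμ : 1 < μ) (t τ : ℝ) :
    greenG μ t τ = 1 / Real.Gamma μ *
      ((1 - |τ|) ^ (μ - 1) - (Ι t 0).indicator (fun τ => |t - τ| ^ (μ - 1)) τ) := by
  unfold greenG
  congr 1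
  rcases le_or_gt τ 0 with hτ | hτ
  · rw [if_pos hτ, abs_of_nonpos hτ, sub_neg_eq_add, add_comm]
    split_ifs with htτ
    · rw [indicator_of_notMem fun h => by rcases mem_uIoc.mp h with h | h <;> linarith [h.1, h.2],
        sub_zero]
    · rw [indicator_of_mem (mem_uIoc.mpr (Or.inl ⟨not_le.mp htτ, hτ⟩)), abs_sub_comm,
        abs_of_nonneg (by linarith [not_le.mp htτ])]
  · rw [if_neg hτ.not_ge, abs_of_pos hτ]
    split_ifs with htτ
    · rcases htτ.eq_or_lt with rfl | htτ
      · rw [indicator_apply_eq_zero.mpr fun _ => by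
          rw [sub_self, abs_zero, Real.zero_rpow (by linarith)], sub_zero]
      · rw [indicator_of_notMem fun h => by rcases mem_uIoc.mp h with h | h <;> linarith [h.1, h.2],
          sub_zero]
    · rw [indicator_of_mem (mem_uIoc.mpr (Or.inr ⟨hτ, (not_le.mp htτ).le⟩)),
        abs_of_nonneg (by linarith [not_le.mp htτ])]

lemma integral_uIoc_abs_sub_rpow {r : ℝ} (hr : -1 < r) (a b : ℝ) :
    ∫ τ in Ι a b, |a - τ| ^ r = |b - a| ^ (r + 1) / (r + 1) := by
  have hr' : r + 1 ≠ 0 := by linarith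
  rcases le_total a b with hab | hba
  · rw [uIoc_of_le hab, ← integral_of_le hab, abs_of_nonneg (sub_nonneg.mpr hab),
      integral_congr (g := fun τ => (τ - a) ^ r) fun τ hτ => ?_,
      integral_comp_sub_right (fun u => u ^ r), sub_self, integral_rpow (Or.inl hr),
      Real.zero_rpow hr', sub_zero]
    rw [uIcc_of_le hab] at hτ
    simp only [abs_sub_comm a τ, abs_of_nonneg (sub_nonneg.mpr hτ.1)]
  · rw [uIoc_of_ge hba, ← integral_of_le hba, abs_of_nonpos (sub_nonpos.mpr hba), neg_sub,
      integral_congr (g := fun τ => (a - τ) ^ r) fun τ hτ => ?_,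
      integral_comp_sub_left (fun u => u ^ r), sub_self, integral_rpow (Or.inl hr),
      Real.zero_rpow hr', sub_zero]
    rw [uIcc_of_le hba] at hτ
    simp only [abs_of_nonneg (sub_nonneg.mpr hτ.2)]

lemma continuous_one_sub_abs_rpow {r : ℝ} (hr : 0 ≤ r) : Continuous fun τ : ℝ => (1 - |τ|) ^ r :=
  (continuous_const.sub continuous_abs).rpow_const fun _ => Or.inr hr

lemma integral_one_sub_abs_rpow {r : ℝ} (hr : 0 ≤ r) :
    ∫ τ in (-1 : ℝ)..1, (1 - |τ|) ^ r = 2 / (r + 1) := by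
  rw [← integral_add_adjacent_intervals (b := 0)
    ((continuous_one_sub_abs_rpow hr).intervalIntegrable _ _)
    ((continuous_one_sub_abs_rpow hr).intervalIntegrable _ _)]
  have hhalf : ∫ τ in (0 : ℝ)..1, (1 - |τ|) ^ r = 1 / (r + 1) := by
    rw [integral_congr (g := fun τ => (1 - τ) ^ r) fun τ hτ => ?_,
      integral_comp_sub_left (fun u => u ^ r), sub_self, sub_zero,
      integral_rpow (Or.inl (by linarith)), Real.one_rpow, Real.zero_rpow (by linarith), sub_zero]
    rw [uIcc_of_le zero_le_one] at hτ
    simp only [abs_of_nonneg hτ.1]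
  have hsymm : ∫ τ in (-1 : ℝ)..0, (1 - |τ|) ^ r = ∫ τ in (0 : ℝ)..1, (1 - |τ|) ^ r := by
    simpa only [abs_neg, neg_zero, eq_comm] using
      integral_comp_neg (a := (0 : ℝ)) (b := 1) fun τ => (1 - |τ|) ^ r
  rw [hsymm, hhalf]
  ring

section

variable {μ : ℝ} (hμ : 1 < μ)
include hμ

lemma integrable_indicator_uIoc_abs_sub_rpow (t : ℝ) :
    Integrable ((Ι t 0).indicator fun τ => |t - τ| ^ (μ - 1)) := by
  refine IntegrableOn.integrable_indicator ?_ measurableSet_uIoc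
  exact Continuous.integrableOn_uIoc
    ((continuous_const.sub continuous_id).abs.rpow_const fun _ => Or.inr (by linarith))

lemma intervalIntegrable_greenG (t a b : ℝ) : IntervalIntegrable (greenG μ t) volume a b := by
  simp_rw [funext (greenG_eq_sub_indicator hμ t)]
  exact (((continuous_one_sub_abs_rpow (by linarith)).intervalIntegrable a b).sub
    (integrable_indicator_uIoc_abs_sub_rpow hμ t).intervalIntegrable).const_mul _

lemma greenG_le (t τ : ℝ) : greenG μ t τ ≤ 1 / Real.Gamma μ * (1 - |τ|) ^ (μ - 1) := by
  rw [greenG_eq_sub_indicator hμ]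
  have hΓ : 0 < Real.Gamma μ := Real.Gamma_pos_of_pos (by linarith)
  refine mul_le_mul_of_nonneg_left (sub_le_self _ (indicator_nonneg (fun τ _ => ?_) τ))
    (by positivity)
  positivity

lemma greenG_nonneg {t τ : ℝ} (ht : t ∈ Icc (-1) 1) (hτ : τ ∈ Icc (-1) 1) : 0 ≤ greenG μ t τ := by
  rw [greenG_eq_sub_indicator hμ]
  have hΓ : 0 < Real.Gamma μ := Real.Gamma_pos_of_pos (by linarith)
  refine mul_nonneg (by positivity) (sub_nonneg.mpr ?_)
  by_cases h : τ ∈ Ι t 0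
  · rw [indicator_of_mem h]
    have hdist : |t - τ| ≤ 1 - |τ| := by
      rcases mem_uIoc.mp h with ⟨h1, h2⟩ | ⟨h1, h2⟩
      · rw [abs_sub_comm, abs_of_pos (by linarith), abs_of_nonpos h2]; linarith [ht.1]
      · rw [abs_of_nonneg (by linarith), abs_of_pos h1]; linarith [ht.2]
    exact Real.rpow_le_rpow (abs_nonneg _) hdist (by linarith)
  · rw [indicator_of_notMem h]
    exact Real.rpow_nonneg (by linarith [abs_le.mpr hτ]) _

lemma integral_greenG {t : ℝ} (ht : t ∈ Icc (-1) 1) :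
    ∫ τ in (-1 : ℝ)..1, greenG μ t τ = (2 - |t| ^ μ) / Real.Gamma (μ + 1) := by
  have hsub : Ι t 0 ⊆ Ioc (-1) 1 := fun τ hτ => by
    rcases mem_uIoc.mp hτ with ⟨h1, h2⟩ | ⟨h1, h2⟩ <;> constructor <;> linarith [ht.1, ht.2]
  have hind :
      ∫ τ in (-1 : ℝ)..1, (Ι t 0).indicator (fun τ => |t - τ| ^ (μ - 1)) τ = |t| ^ μ / μ := by
    rw [integral_of_le (by norm_num), setIntegral_indicator measurableSet_uIoc,
      inter_eq_right.mpr hsub, integral_uIoc_abs_sub_rpow (by linarith), zero_sub, abs_neg,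
      sub_add_cancel]
  simp_rw [greenG_eq_sub_indicator hμ t]
  rw [intervalIntegral.integral_const_mul,
    integral_sub ((continuous_one_sub_abs_rpow (by linarith)).intervalIntegrable _ _)
      (integrable_indicator_uIoc_abs_sub_rpow hμ t).intervalIntegrable,
    integral_one_sub_abs_rpow (by linarith), hind, sub_add_cancel, Real.Gamma_add_one (by linarith)]
  field_simp

lemma intervalIntegrable_greenG_mul {t : ℝ} (ht : t ∈ Icc (-1) 1) {y : ℝ → ℝ}
    (hy : ContinuousOn y (Ioo (-1) 1)) (hy0 : ∀ τ ∈ Ioo (-1 : ℝ) 1, 0 ≤ y τ)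
    (hyint : IntegrableOn (fun τ => (1 - |τ|) ^ (μ - 1) * y τ) (Ioo (-1 : ℝ) 1)) :
    IntervalIntegrable (fun τ => greenG μ t τ * y τ) volume (-1) 1 := by
  rw [intervalIntegrable_iff_integrableOn_Ioo_of_le (by norm_num)]
  have hG : AEStronglyMeasurable (greenG μ t) (volume.restrict (Ioo (-1) 1)) :=
    ((intervalIntegrable_greenG hμ t (-1) 1).1.mono_set Ioo_subset_Ioc_self).aestronglyMeasurable
  refine (hyint.const_mul (1 / Real.Gamma μ)).mono'
    (hG.mul (hy.aestronglyMeasurable measurableSet_Ioo))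
    (ae_restrict_of_forall_mem measurableSet_Ioo fun τ hτ => ?_)
  rw [Real.norm_eq_abs, abs_of_nonneg (mul_nonneg (greenG_nonneg hμ ht (Ioo_subset_Icc_self hτ))
    (hy0 τ hτ)), ← mul_assoc]
  exact mul_le_mul_of_nonneg_right (greenG_le hμ t τ) (hy0 τ hτ)

end

theorem solution_lower_bound_general (μ : ℝ) (hμ1 : 1 < μ)
    (y : ℝ → ℝ) (hy : ContinuousOn y (Set.Ioo (-1) 1))
    (γ : ℝ) (hγ : 0 < γ)
    (hyγ : ∀ t ∈ Set.Ioo (-1 : ℝ) 1, γ ≤ y t)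
    (hyint : MeasureTheory.IntegrableOn
      (fun τ => (1 - |τ|) ^ (μ - 1) * y τ) (Set.Ioo (-1 : ℝ) 1))
    (x : ℝ → ℝ)
    (hx : ∀ t, x t = ∫ τ in (-1 : ℝ)..1, greenG μ t τ * y τ) :
    (∀ t ∈ Set.Icc (-1 : ℝ) 1,
      2 * γ * (1 - |t| ^ μ) / Real.Gamma (μ + 1) ≤ x t) ∧
    (∀ t ∈ Set.Ioo (-1 : ℝ) 1, 0 < x t) := by
  have hΓ : 0 < Real.Gamma (μ + 1) := Real.Gamma_pos_of_pos (by linarith)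
  have hy0 : ∀ τ ∈ Ioo (-1 : ℝ) 1, 0 ≤ y τ := fun τ hτ => hγ.le.trans (hyγ τ hτ)
  have hbound : ∀ t ∈ Icc (-1 : ℝ) 1, 2 * γ * (1 - |t| ^ μ) / Real.Gamma (μ + 1) ≤ x t := by
    intro t ht
    calc 2 * γ * (1 - |t| ^ μ) / Real.Gamma (μ + 1)
        ≤ γ * ((2 - |t| ^ μ) / Real.Gamma (μ + 1)) := by
          rw [mul_div_assoc']
          refine div_le_div_of_nonneg_right ?_ hΓ.le
          nlinarith [mul_nonneg hγ.le (Real.rpow_nonneg (abs_nonneg t) μ)]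
      _ = ∫ τ in (-1 : ℝ)..1, greenG μ t τ * γ := by
          rw [intervalIntegral.integral_mul_const, integral_greenG hμ1 ht, mul_comm]
      _ ≤ ∫ τ in (-1 : ℝ)..1, greenG μ t τ * y τ :=
          integral_mono_on_of_le_Ioo (by norm_num)
            ((intervalIntegrable_greenG hμ1 t _ _).mul_const γ)
            (intervalIntegrable_greenG_mul hμ1 ht hy hy0 hyint) fun τ hτ =>
            mul_le_mul_of_nonneg_left (hyγ τ hτ) (greenG_nonneg hμ1 ht (Ioo_subset_Icc_self hτ))
      _ = x t := (hx t).symm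
  refine ⟨hbound, fun t ht => lt_of_lt_of_le ?_ (hbound t (Ioo_subset_Icc_self ht))⟩
  have : |t| ^ μ < 1 := Real.rpow_lt_one (abs_nonneg t) (abs_lt.mpr ht) (by linarith)
  have : 0 < 1 - |t| ^ μ := by linarith
  positivity

theorem solution_lower_bound (μ : ℝ) (hμ1 : 1 < μ) (hμ2 : μ ≤ 2)
    (y : ℝ → ℝ) (hy : ContinuousOn y (Set.Ioo (-1) 1))
    (γ : ℝ) (hγ : 0 < γ)
    (hyγ : ∀ t ∈ Set.Ioo (-1 : ℝ) 1, γ ≤ y t)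
    (hyint : MeasureTheory.IntegrableOn
      (fun τ => (1 - |τ|) ^ (μ - 1) * y τ) (Set.Ioo (-1 : ℝ) 1))
    (x : ℝ → ℝ)
    (hx : ∀ t, x t = ∫ τ in (-1 : ℝ)..1, greenG μ t τ * y τ) :
    (∀ t ∈ Set.Icc (-1 : ℝ) 1,
      2 * γ * (1 - |t| ^ μ) / Real.Gamma (μ + 1) ≤ x t) ∧
    (∀ t ∈ Set.Ioo (-1 : ℝ) 1, 0 < x t) :=
  solution_lower_bound_general μ hμ1 y hy γ hγ hyγ hyint x hx
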